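/- For all integers m ≥ 1 and t ≥ 0 and any two distinct vertices u, v of the Koch network K_{m,t}, there is exactly one shortest path between u and v; i.e. the number of paths from u to v of length d(u,v) equals 1. -/

import Mathlib

/-- The triangles of the Koch network `K_{m,t}`: at step `t+1`, each old triangle survives and
each (triangle, corner, group) creates a new triangle. -/
def KochTri (m : ℕ) : ℕ → Type
  | 0 => Unit
  | t+1 => KochTri m t ⊕ (KochTri m t × Fin 3 × Fin m)

/-- The vertices of the Koch network `K_{m,t}`: at step `t+1`, each (triangle, corner, group)
creates two new vertices. -/
def KochVertex (m : ℕ) : ℕ → Type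
  | 0 => Fin 3
  | t+1 => KochVertex m t ⊕ (KochTri m t × Fin 3 × Fin m × Fin 2)

/-- The three corner vertices of each triangle. -/
def KochCorner (m : ℕ) : ∀ t, KochTri m t → Fin 3 → KochVertex m t
  | 0, _, i => i
  | t+1, Sum.inl τ, i => Sum.inl (KochCorner m t τ i)
  | t+1, Sum.inr (τ, c, g), i =>
      ![Sum.inl (KochCorner m t τ c), Sum.inr (τ, c, g, 0), Sum.inr (τ, c, g, 1)] i

instance KochTri.instDecidableEq (m : ℕ) : ∀ t, DecidableEq (KochTri m t)
  | 0 => inferInstanceAs (DecidableEq Unit)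
  | t+1 =>
    letI := KochTri.instDecidableEq m t
    inferInstanceAs (DecidableEq (KochTri m t ⊕ (KochTri m t × Fin 3 × Fin m)))

instance KochVertex.instDecidableEq (m : ℕ) : ∀ t, DecidableEq (KochVertex m t)
  | 0 => inferInstanceAs (DecidableEq (Fin 3))
  | t+1 =>
    letI := KochVertex.instDecidableEq m t
    letI := KochTri.instDecidableEq m t
    inferInstanceAs (DecidableEq (KochVertex m t ⊕ (KochTri m t × Fin 3 × Fin m × Fin 2)))

instance KochTri.instFintype (m : ℕ) : ∀ t, Fintype (KochTri m t)
  | 0 => inferInstanceAs (Fintype Unit)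
  | t+1 =>
    letI := KochTri.instFintype m t
    inferInstanceAs (Fintype (KochTri m t ⊕ (KochTri m t × Fin 3 × Fin m)))

instance KochVertex.instFintype (m : ℕ) : ∀ t, Fintype (KochVertex m t)
  | 0 => inferInstanceAs (Fintype (Fin 3))
  | t+1 =>
    letI := KochVertex.instFintype m t
    letI := KochTri.instFintype m t
    inferInstanceAs (Fintype (KochVertex m t ⊕ (KochTri m t × Fin 3 × Fin m × Fin 2)))

/-- The Koch network `K_{m,t}`: two distinct vertices are adjacent iff they are corners of a
common triangle. -/
def KochGraph (m t : ℕ) : SimpleGraph (KochVertex m t) where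
  Adj u v := u ≠ v ∧ ∃ (τ : KochTri m t) (i j : Fin 3),
      KochCorner m t τ i = u ∧ KochCorner m t τ j = v
  symm := ⟨by rintro u v ⟨hne, τ, i, j, hi, hj⟩; exact ⟨hne.symm, τ, j, i, hj, hi⟩⟩
  loopless := ⟨by rintro u ⟨hne, -⟩; exact hne rfl⟩

instance (m t : ℕ) : DecidableRel (KochGraph m t).Adj := fun u v =>
  inferInstanceAs (Decidable (u ≠ v ∧ ∃ (τ : KochTri m t) (i j : Fin 3),
      KochCorner m t τ i = u ∧ KochCorner m t τ j = v))

/-- The step at which a vertex of `K_{m,t}` was added (initial vertices are added at step 0). -/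
def KochBirth (m : ℕ) : ∀ t, KochVertex m t → ℕ
  | 0, _ => 0
  | t+1, Sum.inl v => KochBirth m t v
  | t+1, Sum.inr _ => t+1

/-- The canonical inclusion of `K_{m,t}` into `K_{m,t+1}`. -/
def KochInl (m t : ℕ) (v : KochVertex m t) : KochVertex m (t+1) := Sum.inl v

/-- The other member of the group of two with which a (non-initial) vertex was added. -/
def KochSibling (m : ℕ) : ∀ t, KochVertex m t → KochVertex m t
  | 0, v => v
  | t+1, Sum.inl v => Sum.inl (KochSibling m t v)
  | t+1, Sum.inr (τ, c, g, p) => Sum.inr (τ, c, g, if p = 0 then 1 else 0)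

/-- The father vertex of a (non-initial) vertex: the existing vertex to which its group of two
was attached. -/
def KochFather (m : ℕ) : ∀ t, KochVertex m t → KochVertex m t
  | 0, v => v
  | t+1, Sum.inl v => Sum.inl (KochFather m t v)
  | t+1, Sum.inr (τ, c, _, _) => Sum.inl (KochCorner m t τ c)

/-!
`K_{m,t+1}` arises from `K_{m,t}` by attaching pendant triangles: the two new vertices of a group
are adjacent only to each other and to their father `f`, so `f` separates them from the rest of
the graph. A path between old vertices therefore never enters a new group (it would pass through
`f` twice), and geodesics between old vertices are exactly those of `K_{m,t}`; a geodesic starting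
at a new vertex must pass through its father, and is then determined by the unique geodesic from
there. Uniqueness of geodesics thus propagates from `K_{m,t}` to `K_{m,t+1}`.
-/

namespace SimpleGraph

variable {V W : Type*} {G : SimpleGraph V} {G' : SimpleGraph W} {a b f : V}

def HasUniqueGeodesic (G : SimpleGraph V) (a b : V) : Prop :=
  ∃! p : G.Walk a b, p.length = G.dist a b

def IsGeodetic (G : SimpleGraph V) : Prop :=
  ∀ a b, G.HasUniqueGeodesic a b

namespace Walk

lemma mem_support_of_forall_adj {S : Set V}
    (hS : ∀ x ∈ S, ∀ y, G.Adj x y → y ∈ S ∨ y = f) (p : G.Walk a b) (ha : a ∈ S) (hb : b ∉ S) :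
    f ∈ p.support := by
  obtain ⟨d, hd, hdS, hdS'⟩ := p.exists_boundary_dart S ha hb
  obtain rfl := (hS _ hdS _ d.adj).resolve_left hdS'
  exact p.dart_snd_mem_support_of_mem_darts hd

lemma IsPath.notMem_of_forall_adj {S : Set V}
    (hS : ∀ x ∈ S, ∀ y, G.Adj x y → y ∈ S ∨ y = f) (hf : f ∉ S) {p : G.Walk a b}
    (hp : p.IsPath) (ha : a ∉ S) (hb : b ∉ S) {x : V} (hx : x ∈ p.support) : x ∉ S := by
  classical
  intro hxS
  have hbefore : f ∈ (p.takeUntil x hx).support := by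
    simpa using (p.takeUntil x hx).reverse.mem_support_of_forall_adj hS hxS ha
  have hafter : f ∈ (p.dropUntil x hx).support.tail := by
    have := (p.dropUntil x hx).mem_support_of_forall_adj hS hxS hb
    rw [← cons_tail_support] at this
    exact (List.mem_cons.mp this).resolve_left (by rintro rfl; exact hf hxS)
  have hnodup := hp.support_nodup
  rw [← p.take_spec hx, support_append, List.nodup_append] at hnodup
  exact hnodup.2.2 _ hbefore _ hafter rfl

lemma exists_map_eq_of_forall_mem_range (φ : G ↪g G') (p : G'.Walk (φ a) (φ b))
    (hp : ∀ z ∈ p.support, z ∈ Set.range φ) : ∃ q : G.Walk a b, q.map φ.toHom = p := by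
  suffices ∀ {x y : W} (p : G'.Walk x y), (∀ z ∈ p.support, z ∈ Set.range φ) →
      ∀ a b (ha : φ a = x) (hb : φ b = y), ∃ q : G.Walk a b, (q.map φ.toHom).copy ha hb = p by
    simpa using this p hp a b rfl rfl
  intro x y p
  induction p with
  | nil =>
    rintro - a b rfl hb
    obtain rfl := φ.injective hb
    exact ⟨.nil, rfl⟩
  | cons h p ih =>
    rintro hp a b rfl rfl
    obtain ⟨c, rfl⟩ := hp _ (List.mem_cons_of_mem _ p.start_mem_support)
    obtain ⟨q, hq⟩ := ih (fun z hz => hp z (List.mem_cons_of_mem _ hz)) c b rfl rfl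
    exact ⟨.cons (φ.map_adj_iff.mp h) q, by simpa using hq⟩

end Walk

namespace HasUniqueGeodesic

lemma refl (a : V) : G.HasUniqueGeodesic a a :=
  ⟨.nil, by simp, fun p hp => by cases p <;> simp_all⟩

lemma of_adj (h : G.Adj a b) : G.HasUniqueGeodesic a b := by
  refine ⟨h.toWalk, by simp [dist_eq_one_iff_adj.mpr h], fun p hp => ?_⟩
  rw [dist_eq_one_iff_adj.mpr h] at hp
  cases p with
  | nil => simp at hp
  | cons _ p => cases p with
    | nil => rfl
    | cons _ _ => simp at hp

lemma symm (h : G.HasUniqueGeodesic a b) : G.HasUniqueGeodesic b a := by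
  obtain ⟨p, hp, huniq⟩ := h
  refine ⟨p.reverse, ?_, fun q hq => ?_⟩ <;> dsimp only at *
  · rw [Walk.length_reverse, hp, dist_comm]
  rw [← huniq q.reverse (by rw [Walk.length_reverse, hq, dist_comm]), Walk.reverse_reverse]

lemma trans_of_forall_mem_support (hcut : ∀ p : G.Walk a b, f ∈ p.support)
    (haf : G.HasUniqueGeodesic a f) (hfb : G.HasUniqueGeodesic f b) : G.HasUniqueGeodesic a b := by
  classical
  obtain ⟨q₁, hq₁, huniq₁⟩ := haf
  obtain ⟨q₂, hq₂, huniq₂⟩ := hfb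
  have hsplit : ∀ p : G.Walk a b, G.dist a f ≤ (p.takeUntil f (hcut p)).length ∧
      G.dist f b ≤ (p.dropUntil f (hcut p)).length ∧
      p.length = (p.takeUntil f (hcut p)).length + (p.dropUntil f (hcut p)).length := by
    intro p
    refine ⟨dist_le _, dist_le _, ?_⟩
    conv_lhs => rw [← p.take_spec (hcut p)]
    exact Walk.length_append _ _
  have hdist : G.dist a b = G.dist a f + G.dist f b := by
    obtain ⟨p, hp⟩ := (q₁.append q₂).reachable.exists_walk_length_eq_dist
    have := dist_le (q₁.append q₂)
    have := hsplit p
    rw [Walk.length_append] at *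
    omega
  refine ⟨q₁.append q₂, ?_, fun p hp => ?_⟩ <;> dsimp only at *
  · rw [Walk.length_append, hq₁, hq₂, hdist]
  obtain ⟨h₁, h₂, hlen⟩ := hsplit p
  calc p = (p.takeUntil f (hcut p)).append (p.dropUntil f (hcut p)) := (p.take_spec _).symm
    _ = q₁.append q₂ := by
      rw [huniq₁ (p.takeUntil f (hcut p)) (by omega), huniq₂ (p.dropUntil f (hcut p)) (by omega)]

lemma map_of_lift_isPath (φ : G ↪g G')
    (hlift : ∀ p : G'.Walk (φ a) (φ b), p.IsPath → ∃ q : G.Walk a b, q.map φ.toHom = p)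
    (h : G.HasUniqueGeodesic a b) : G'.HasUniqueGeodesic (φ a) (φ b) := by
  obtain ⟨q₀, hq₀, huniq⟩ := h
  have hlift' : ∀ p : G'.Walk (φ a) (φ b), p.length = G'.dist (φ a) (φ b) →
      ∃ q : G.Walk a b, q.map φ.toHom = p :=
    fun p hp => hlift p (p.isPath_of_length_eq_dist hp)
  have hdist : G'.dist (φ a) (φ b) = G.dist a b := by
    obtain ⟨p, hp⟩ : ∃ p : G'.Walk (φ a) (φ b), p.length = G'.dist (φ a) (φ b) :=
      (q₀.map φ.toHom).reachable.exists_walk_length_eq_dist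
    obtain ⟨q, rfl⟩ := hlift' p hp
    have h₁ : G'.dist (φ a) (φ b) ≤ q₀.length := by simpa using dist_le (q₀.map φ.toHom)
    have h₂ := dist_le q
    rw [Walk.length_map] at hp
    omega
  refine ⟨q₀.map φ.toHom, ?_, fun p hp => ?_⟩ <;> dsimp only at *
  · rw [Walk.length_map, hq₀, hdist]
  obtain ⟨q, rfl⟩ := hlift' p hp
  rw [huniq q (by rw [← Walk.length_map φ.toHom, hp, hdist])]

lemma existsUnique_isPath (h : G.HasUniqueGeodesic a b) :
    ∃! p : G.Walk a b, p.IsPath ∧ p.length = G.dist a b := by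
  obtain ⟨p, hp, huniq⟩ := h
  exact ⟨p, ⟨p.isPath_of_length_eq_dist hp, hp⟩, fun q hq => huniq q hq.2⟩

end HasUniqueGeodesic

end SimpleGraph

namespace KochGraph

open SimpleGraph

variable {m t : ℕ}

def group (τ : KochTri m t) (c : Fin 3) (g : Fin m) : Set (KochVertex m (t+1)) :=
  Set.range fun p : Fin 2 => Sum.inr (τ, c, g, p)

lemma adj_inl_inl {u v : KochVertex m t} :
    (KochGraph m (t+1)).Adj (Sum.inl u) (Sum.inl v) ↔ (KochGraph m t).Adj u v := by
  constructor
  · rintro ⟨hne, T, i, j, hi, hj⟩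
    rcases T with τ | ⟨τ, c, g⟩
    · exact ⟨fun h => hne (by rw [h]), τ, i, j, Sum.inl.inj hi, Sum.inl.inj hj⟩
    · fin_cases i <;> fin_cases j <;> simp_all [KochCorner]
  · rintro ⟨hne, τ, i, j, rfl, rfl⟩
    exact ⟨fun h => hne (Sum.inl.inj h), Sum.inl τ, i, j, rfl, rfl⟩

def inlEmbedding (m t : ℕ) : KochGraph m t ↪g KochGraph m (t+1) where
  toFun := KochInl m t
  inj' := Sum.inl_injective
  map_rel_iff' := adj_inl_inl

lemma adj_inr_inl_corner (τ : KochTri m t) (c : Fin 3) (g : Fin m) (p : Fin 2) :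
    (KochGraph m (t+1)).Adj (Sum.inr (τ, c, g, p)) (Sum.inl (KochCorner m t τ c)) := by
  refine ⟨Sum.inr_ne_inl, Sum.inr (τ, c, g), p.succ, 0, ?_, rfl⟩
  fin_cases p <;> rfl

lemma adj_inr_inr {τ : KochTri m t} {c : Fin 3} {g : Fin m} {p q : Fin 2} (hpq : p ≠ q) :
    (KochGraph m (t+1)).Adj (Sum.inr (τ, c, g, p)) (Sum.inr (τ, c, g, q)) := by
  refine ⟨by simpa [KochVertex] using hpq, Sum.inr (τ, c, g), p.succ, q.succ, ?_, ?_⟩ <;>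
    [fin_cases p; fin_cases q] <;> rfl

lemma mem_group_or_eq_of_adj {τ : KochTri m t} {c : Fin 3} {g : Fin m}
    {x y : KochVertex m (t+1)} (hx : x ∈ group τ c g) (hxy : (KochGraph m (t+1)).Adj x y) :
    y ∈ group τ c g ∨ y = Sum.inl (KochCorner m t τ c) := by
  obtain ⟨p, rfl⟩ := hx
  obtain ⟨-, T, i, j, hi, rfl⟩ := hxy
  rcases T with τ' | ⟨τ', c', g'⟩
  · simp [KochCorner] at hi
  · obtain ⟨rfl, rfl, rfl⟩ : τ' = τ ∧ c' = c ∧ g' = g := by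
      fin_cases i <;> simp [KochCorner, KochVertex] at hi <;> simp_all
    fin_cases j
    · exact Or.inr rfl
    · exact Or.inl ⟨0, rfl⟩
    · exact Or.inl ⟨1, rfl⟩

lemma inl_notMem_group (v : KochVertex m t) (τ : KochTri m t) (c : Fin 3) (g : Fin m) :
    (Sum.inl v : KochVertex m (t+1)) ∉ group τ c g :=
  fun ⟨_, h⟩ => Sum.inr_ne_inl h

lemma corner_mem_support_of_mem_group {τ : KochTri m t} {c : Fin 3} {g : Fin m}
    {a b : KochVertex m (t+1)} (ha : a ∈ group τ c g) (hb : b ∉ group τ c g)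
    (p : (KochGraph m (t+1)).Walk a b) : Sum.inl (KochCorner m t τ c) ∈ p.support :=
  p.mem_support_of_forall_adj (fun _ hx _ hxy => mem_group_or_eq_of_adj hx hxy) ha hb

lemma mem_range_inlEmbedding_of_isPath {u v : KochVertex m t}
    {p : (KochGraph m (t+1)).Walk (Sum.inl u) (Sum.inl v)} (hp : p.IsPath) :
    ∀ x ∈ p.support, x ∈ Set.range (inlEmbedding m t) := by
  rintro (w | ⟨τ, c, g, q⟩) hx
  · exact ⟨w, rfl⟩
  · exact absurd ⟨q, rfl⟩ <| hp.notMem_of_forall_adj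
      (fun _ hx _ hxy => mem_group_or_eq_of_adj hx hxy) (inl_notMem_group _ τ c g)
      (inl_notMem_group u τ c g) (inl_notMem_group v τ c g) hx

lemma hasUniqueGeodesic_inl_inl (IH : (KochGraph m t).IsGeodetic) (u v : KochVertex m t) :
    (KochGraph m (t+1)).HasUniqueGeodesic (Sum.inl u) (Sum.inl v) :=
  (IH u v).map_of_lift_isPath (inlEmbedding m t) fun p hp =>
    p.exists_map_eq_of_forall_mem_range _ (mem_range_inlEmbedding_of_isPath hp)

lemma hasUniqueGeodesic_inr_inl (IH : (KochGraph m t).IsGeodetic) (τ : KochTri m t) (c : Fin 3)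
    (g : Fin m) (p : Fin 2) (v : KochVertex m t) :
    (KochGraph m (t+1)).HasUniqueGeodesic (Sum.inr (τ, c, g, p)) (Sum.inl v) :=
  .trans_of_forall_mem_support
    (corner_mem_support_of_mem_group ⟨p, rfl⟩ (inl_notMem_group v τ c g))
    (.of_adj (adj_inr_inl_corner τ c g p)) (hasUniqueGeodesic_inl_inl IH _ v)

lemma isGeodetic_succ (IH : (KochGraph m t).IsGeodetic) : (KochGraph m (t+1)).IsGeodetic
  | .inl u, .inl v => hasUniqueGeodesic_inl_inl IH u v
  | .inr (τ, c, g, p), .inl v => hasUniqueGeodesic_inr_inl IH τ c g p v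
  | .inl u, .inr (τ, c, g, p) => (hasUniqueGeodesic_inr_inl IH τ c g p u).symm
  | .inr (τ, c, g, p), .inr (τ', c', g', p') => by
    by_cases hgroup : Sum.inr (τ', c', g', p') ∈ group τ c g
    · obtain ⟨q, hq⟩ := hgroup
      obtain ⟨rfl, rfl, rfl, rfl⟩ := Sum.inr.inj hq
      by_cases hpq : p = p'
      · subst hpq
        exact .refl _
      · exact .of_adj (adj_inr_inr hpq)
    · exact .trans_of_forall_mem_support (corner_mem_support_of_mem_group ⟨p, rfl⟩ hgroup)
        (.of_adj (adj_inr_inl_corner τ c g p)) (hasUniqueGeodesic_inr_inl IH τ' c' g' p' _).symm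

lemma isGeodetic : ∀ t, (KochGraph m t).IsGeodetic
  | 0 => fun u v => by
    by_cases huv : u = v
    · subst huv
      exact .refl u
    · exact .of_adj ⟨huv, (), u, v, rfl, rfl⟩
  | t+1 => isGeodetic_succ (isGeodetic t)

end KochGraph

theorem koch_unique_shortest_path_general (m t : ℕ)
    (u v : KochVertex m t) :
    ∃! p : (KochGraph m t).Walk u v, p.IsPath ∧ p.length = (KochGraph m t).dist u v :=
  (KochGraph.isGeodetic t u v).existsUnique_isPath

/-- For all integers m ≥ 1 and t ≥ 0 and any two distinct vertices u, v of the
Koch network `K_{m,t}`, there is exactly one path between u and v of length `d(u,v)`. -/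
theorem koch_unique_shortest_path (m t : ℕ) (hm : 1 ≤ m)
    (u v : KochVertex m t) (huv : u ≠ v) :
    ∃! p : (KochGraph m t).Walk u v, p.IsPath ∧ p.length = (KochGraph m t).dist u v :=
  koch_unique_shortest_path_general m t u v
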